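/- arXiv:2011.05701 — 3 statements merged into one kernel-verified Lean document; each statement's English description precedes it below -/
import Mathlib

section
/- (Error decomposition via diagonalization) Under the biorthogonality relations ∫_0^Y y^α v_i' v_j' dy = δ_{ij}, ∫_0^Y y^α v_i v_j dy = μ_i δ_{ij}, suppose U_i ∈ H¹₀(Ω) solve a_{μ_i,Ω}(U_i, V) = d_s v_i(0) ⟨f, V⟩ for all V ∈ H¹₀(Ω), and Π_i U_i are their Galerkin projections onto closed subspaces W_i ⊂ H¹₀(Ω). Set u_M := Σ_i U_i v_i and u_{h,M} := Σ_i (Π_i U_i) v_i. Then the extension-energy error satisfies a_C(u_M − u_{h,M}, u_M − u_{h,M}) = Σ_{i=1}^M ‖U_i − Π_i U_i‖²_{μ_i,Ω}, where a_C(Z,Z) = ∫_0^Y∫_Ω y^α (A∇_x Z·∇_x Z + |∂_y Z|²). -/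
/-!
Writing `e i = U i - P i`, the error is `∑ i, v i ⊗ e i`. Expanding the energy bilinearly in
both the form `B` and the inner product turns it into `∑ i j` of `B (e i) (e j)` and
`⟪e i, e j⟫` against the weighted integrals `∫ y^α v_i v_j` and `∫ y^α v_i' v_j'`, and
biorthogonality kills every off-diagonal term (Pythagoras for biorthogonal systems).
-/

open Real MeasureTheory RealInnerProductSpace

section WeightedExpansion

variable {ι E X : Type*} [Fintype ι] [AddCommGroup E] [Module ℝ E]

theorem LinearMap.apply_sum_smul_sum_smul (B : E →ₗ[ℝ] E →ₗ[ℝ] ℝ) (c d : ι → ℝ) (e : ι → E) :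
    B (∑ i, c i • e i) (∑ j, d j • e j) = ∑ i, ∑ j, c i * d j * B (e i) (e j) := by
  simp only [map_sum, LinearMap.sum_apply, map_smul, LinearMap.smul_apply, smul_eq_mul,
    Finset.mul_sum]
  rw [Finset.sum_comm]
  exact Finset.sum_congr rfl fun i _ => Finset.sum_congr rfl fun j _ => by ring

theorem LinearMap.mul_apply_sum_smul_sum_smul (B : E →ₗ[ℝ] E →ₗ[ℝ] ℝ) (w : ℝ) (c : ι → ℝ)
    (e : ι → E) :
    w * B (∑ i, c i • e i) (∑ i, c i • e i) = ∑ i, ∑ j, B (e i) (e j) * (w * (c i * c j)) := by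
  rw [B.apply_sum_smul_sum_smul, Finset.mul_sum]
  exact Finset.sum_congr rfl fun i _ => by
    rw [Finset.mul_sum]
    exact Finset.sum_congr rfl fun j _ => by ring

variable [MeasurableSpace X] {ν : Measure X} (B : E →ₗ[ℝ] E →ₗ[ℝ] ℝ) {w : X → ℝ}
  {φ : ι → X → ℝ} (e : ι → E)

theorem integrable_weighted_apply_sum_smul
    (hint : ∀ i j, Integrable (fun x => w x * (φ i x * φ j x)) ν) :
    Integrable (fun x => w x * B (∑ i, φ i x • e i) (∑ i, φ i x • e i)) ν := by
  simp_rw [LinearMap.mul_apply_sum_smul_sum_smul]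
  exact integrable_finsetSum _ fun i _ =>
    integrable_finsetSum _ fun j _ => (hint i j).const_mul _

theorem integral_weighted_apply_sum_smul
    (hint : ∀ i j, Integrable (fun x => w x * (φ i x * φ j x)) ν) :
    ∫ x, w x * B (∑ i, φ i x • e i) (∑ i, φ i x • e i) ∂ν
      = ∑ i, ∑ j, B (e i) (e j) * ∫ x, w x * (φ i x * φ j x) ∂ν := by
  simp_rw [LinearMap.mul_apply_sum_smul_sum_smul]
  rw [integral_finsetSum _ fun i _ =>
    integrable_finsetSum _ fun j _ => (hint i j).const_mul _]
  refine Finset.sum_congr rfl fun i _ => ?_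
  rw [integral_finsetSum _ fun j _ => (hint i j).const_mul _]
  exact Finset.sum_congr rfl fun j _ => integral_const_mul _ _

theorem integral_weighted_apply_sum_smul_of_orthogonal [DecidableEq ι] (c : ι → ℝ)
    (hint : ∀ i j, Integrable (fun x => w x * (φ i x * φ j x)) ν)
    (horth : ∀ i j, ∫ x, w x * (φ i x * φ j x) ∂ν = if i = j then c i else 0) :
    ∫ x, w x * B (∑ i, φ i x • e i) (∑ i, φ i x • e i) ∂ν = ∑ i, c i * B (e i) (e i) := by
  simp only [integral_weighted_apply_sum_smul B e hint, horth, mul_ite, mul_zero,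
    Finset.sum_ite_eq, Finset.mem_univ, if_true]
  exact Finset.sum_congr rfl fun i _ => mul_comm _ _

end WeightedExpansion

theorem stmt_9_general {E : Type*} [NormedAddCommGroup E] [InnerProductSpace ℝ E]
    (B : E →ₗ[ℝ] E →ₗ[ℝ] ℝ)
    (Y α : ℝ)
    (M : ℕ) (v v' : Fin M → ℝ → ℝ)
    (μ : Fin M → ℝ)
    (hint1 : ∀ i j, IntegrableOn (fun y => y ^ α * (v' i y * v' j y)) (Set.Ioc 0 Y))
    (hint2 : ∀ i j, IntegrableOn (fun y => y ^ α * (v i y * v j y)) (Set.Ioc 0 Y))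
    (horth1 : ∀ i j,
      (∫ y in Set.Ioc 0 Y, y ^ α * (v' i y * v' j y)) = if i = j then 1 else 0)
    (horth2 : ∀ i j,
      (∫ y in Set.Ioc 0 Y, y ^ α * (v i y * v j y)) = if i = j then μ i else 0)
    (U : Fin M → E)
    (P : Fin M → E) :
    (∫ y in Set.Ioc 0 Y, y ^ α *
        (B (∑ i, v i y • (U i - P i)) (∑ i, v i y • (U i - P i))
          + ‖∑ i, v' i y • (U i - P i)‖ ^ 2))
      = ∑ i, (μ i * B (U i - P i) (U i - P i) + ‖U i - P i‖ ^ 2) := by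
  simp_rw [← real_inner_self_eq_norm_sq, ← innerₗ_apply_apply, mul_add]
  rw [integral_add (integrable_weighted_apply_sum_smul B _ hint2)
      (integrable_weighted_apply_sum_smul (innerₗ E) _ hint1),
    integral_weighted_apply_sum_smul_of_orthogonal B _ μ hint2 horth2,
    integral_weighted_apply_sum_smul_of_orthogonal (innerₗ E) _ (fun _ => 1) hint1 horth1,
    ← Finset.sum_add_distrib]
  simp only [one_mul]

/-- Error decomposition via diagonalization (Lemma 3 of the paper): with the
biorthogonal eigenfunctions `v_i` on `(0,Y)` (weight `y^α`), solutions `U_i`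
of the decoupled reaction–diffusion problems
`a_{μ_i}(U_i, W) = d_s v_i(0) ⟨f, W⟩`, and Galerkin projections `P_i = Π_i U_i`
onto closed subspaces `W_i`, the extension energy of
`u_M − u_{h,M} = ∑ (U_i − P_i) v_i` equals `∑ ‖U_i − P_i‖²_{μ_i}`.
`E` plays the role of `H¹₀(Ω)` with the `L²` inner product, `B` the form
`∫ A∇U·∇V`. -/
theorem stmt_9 {E : Type*} [NormedAddCommGroup E] [InnerProductSpace ℝ E]
    (B : E →ₗ[ℝ] E →ₗ[ℝ] ℝ) (hBsymm : ∀ u w : E, B u w = B w u)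
    (Y α : ℝ) (hY : 0 < Y) (hα : α ∈ Set.Ioo (-1:ℝ) 1)
    (M : ℕ) (v v' : Fin M → ℝ → ℝ)
    (hderiv : ∀ i, ∀ y ∈ Set.Ioc 0 Y, HasDerivAt (v i) (v' i y) y)
    (μ : Fin M → ℝ) (hμ : ∀ i, 0 < μ i)
    (hint1 : ∀ i j, IntegrableOn (fun y => y ^ α * (v' i y * v' j y)) (Set.Ioc 0 Y))
    (hint2 : ∀ i j, IntegrableOn (fun y => y ^ α * (v i y * v j y)) (Set.Ioc 0 Y))
    (horth1 : ∀ i j,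
      (∫ y in Set.Ioc 0 Y, y ^ α * (v' i y * v' j y)) = if i = j then 1 else 0)
    (horth2 : ∀ i j,
      (∫ y in Set.Ioc 0 Y, y ^ α * (v i y * v j y)) = if i = j then μ i else 0)
    (ds : ℝ) (f : E →L[ℝ] ℝ)
    (U : Fin M → E)
    (hU : ∀ i, ∀ w : E, μ i * B (U i) w + ⟪U i, w⟫ = ds * v i 0 * f w)
    (Wsp : Fin M → Submodule ℝ E) (hWcl : ∀ i, IsClosed ((Wsp i : Set E)))
    (P : Fin M → E) (hP : ∀ i, P i ∈ Wsp i)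
    (hGal : ∀ i, ∀ w ∈ Wsp i,
      μ i * B (U i - P i) w + ⟪U i - P i, w⟫ = (0:ℝ)) :
    (∫ y in Set.Ioc 0 Y, y ^ α *
        (B (∑ i, v i y • (U i - P i)) (∑ i, v i y • (U i - P i))
          + ‖∑ i, v' i y • (U i - P i)‖ ^ 2))
      = ∑ i, (μ i * B (U i - P i) (U i - P i) + ‖U i - P i‖ ^ 2) :=
  stmt_9_general B Y α M v v' μ hint1 hint2 horth1 horth2 U P
end

section
/- (Scalar extension identity) For λ > 0, s ∈ (0,1), and α = 1−2s, let ψ_λ : (0,∞) → ℝ be the decaying solution of the ODE ψ'' + (α/y) ψ' − λ ψ = 0 with ψ(0) = 1 (expressible via the modified Bessel function K_s: ψ_λ(y) = (2^{1-s}/Γ(s)) (√λ y)^s K_s(√λ y)). Then −lim_{y→0⁺} y^α ψ_λ'(y) = d_s λ^s with d_s = 2^{1-2s} Γ(1-s)/Γ(s). -/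
/-!
The decaying solution is `ψ_λ(y) = K(s - 1, λy²/4) / Γ(s)`, where
`K(a, c) = ∫₀^∞ tᵃ e^(-t - c/t) dt`.
Differentiating under the integral sign gives `∂_c K(a, c) = -K(a - 1, c)`, and integrating the
`t`-derivative of the integrand over `(0, ∞)` gives `K(a) = a K(a - 1) + c K(a - 2)`; together they
are exactly the ODE. By the maximum principle (at a positive interior maximum `ψ' = 0` and
`ψ'' = λψ > 0`) it is the only solution with these boundary values. Finally, the substitution
`t ↦ c / t` turns `y^α ψ_λ'(y)` into a constant multiple of `K(-s, λy²/4)`, which tends to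
`Γ(1 - s)` as `y → 0⁺`.
-/

open Real Filter MeasureTheory Set Topology

noncomputable def besselKernel (a c t : ℝ) : ℝ := t ^ a * exp (-t - c / t)

/-- `besselIntegral a (z ^ 2 / 4) = 2 (z / 2) ^ (a + 1) K_{a+1}(z)`, with `K_ν` the modified Bessel
function of the second kind. -/
noncomputable def besselIntegral (a c : ℝ) : ℝ := ∫ t in Ioi 0, besselKernel a c t

lemma integrableOn_exp_neg_mul_rpow {a : ℝ} (ha : -1 < a) :
    IntegrableOn (fun t => exp (-t) * t ^ a) (Ioi 0) := by
  simpa using GammaIntegral_convergent (s := a + 1) (by linarith)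

section Kernel

variable {a c t : ℝ}

lemma besselKernel_nonneg (ht : 0 ≤ t) : 0 ≤ besselKernel a c t := by
  unfold besselKernel; positivity

lemma continuousOn_besselKernel : ContinuousOn (besselKernel a c) (Ioi 0) := by
  intro t (ht : 0 < t)
  exact ((continuousAt_id.rpow_const (Or.inl ht.ne')).mul
    (by fun_prop (disch := exact ht.ne'))).continuousWithinAt

lemma besselKernel_le_exp_neg_mul_rpow (hc : 0 ≤ c) (ht : 0 < t) :
    besselKernel a c t ≤ exp (-t) * t ^ a := by
  rw [besselKernel, mul_comm]
  gcongr
  linarith [div_nonneg hc ht.le]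

lemma besselKernel_le_factorial_mul (hc : 0 < c) (n : ℕ) (ht : 0 < t) :
    besselKernel a c t ≤ n.factorial / c ^ n * (exp (-t) * t ^ (a + n)) := by
  have hinv : exp (-(c / t)) ≤ n.factorial / c ^ n * t ^ n :=
    calc exp (-(c / t)) = (exp (c / t))⁻¹ := exp_neg _
      _ ≤ ((c / t) ^ n / n.factorial)⁻¹ :=
        inv_anti₀ (by positivity) (pow_div_factorial_le_exp (x := c / t) (by positivity) n)
      _ = n.factorial / c ^ n * t ^ n := by rw [inv_div, div_pow]; field_simp
  rw [besselKernel, sub_eq_add_neg, exp_add, rpow_add ht, rpow_natCast]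
  calc t ^ a * (exp (-t) * exp (-(c / t)))
      ≤ t ^ a * (exp (-t) * (n.factorial / c ^ n * t ^ n)) := by gcongr
    _ = _ := by ring

lemma besselKernel_antitone (ht : 0 < t) {c' : ℝ} (h : c' ≤ c) :
    besselKernel a c t ≤ besselKernel a c' t := by
  unfold besselKernel
  gcongr

lemma aestronglyMeasurable_besselKernel :
    AEStronglyMeasurable (besselKernel a c) (volume.restrict (Ioi 0)) :=
  continuousOn_besselKernel.aestronglyMeasurable measurableSet_Ioi

lemma integrableOn_besselKernel (hc : 0 < c) : IntegrableOn (besselKernel a c) (Ioi 0) := by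
  obtain ⟨n, hn⟩ := exists_nat_gt (-(a + 1))
  refine Integrable.mono' ((integrableOn_exp_neg_mul_rpow (a := a + n) (by linarith)).const_mul
    (n.factorial / c ^ n)) aestronglyMeasurable_besselKernel ?_
  filter_upwards [ae_restrict_mem measurableSet_Ioi] with t (ht : 0 < t)
  rw [norm_of_nonneg (besselKernel_nonneg ht.le)]
  exact besselKernel_le_factorial_mul hc n ht

lemma tendsto_besselKernel_nhdsGT_zero (hc : 0 < c) :
    Tendsto (besselKernel a c) (𝓝[>] 0) (𝓝 0) := by
  obtain ⟨n, hn⟩ := exists_nat_gt (-a)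
  have hpow : Tendsto (fun t : ℝ => t ^ (a + n)) (𝓝 0) (𝓝 0) := by
    simpa [zero_rpow (by linarith : 0 < a + n).ne'] using
      (continuousAt_rpow_const 0 (a + n) (Or.inr (by linarith))).tendsto
  refine squeeze_zero' (eventually_mem_nhdsWithin.mono fun t ht => besselKernel_nonneg ht.out.le)
    (eventually_mem_nhdsWithin.mono fun t (ht : 0 < t) => ?_)
    (by simpa using (hpow.mono_left nhdsWithin_le_nhds).const_mul (n.factorial / c ^ n))
  calc besselKernel a c t ≤ n.factorial / c ^ n * (exp (-t) * t ^ (a + n)) :=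
        besselKernel_le_factorial_mul hc n ht
    _ ≤ n.factorial / c ^ n * t ^ (a + n) := by
        gcongr
        exact mul_le_of_le_one_left (by positivity) (exp_le_one_iff.2 (by linarith))

lemma tendsto_besselKernel_atTop (hc : 0 ≤ c) : Tendsto (besselKernel a c) atTop (𝓝 0) := by
  refine squeeze_zero' (g := fun t => exp (-t) * t ^ a)
    ((eventually_gt_atTop 0).mono fun t ht => besselKernel_nonneg ht.le)
    ((eventually_gt_atTop 0).mono fun t ht => ?_)
    (by simpa [mul_comm] using tendsto_rpow_mul_exp_neg_mul_atTop_nhds_zero a 1 one_pos)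
  exact besselKernel_le_exp_neg_mul_rpow hc ht

lemma hasDerivAt_besselKernel (ht : 0 < t) :
    HasDerivAt (besselKernel a c)
      (a * besselKernel (a - 1) c t - besselKernel a c t + c * besselKernel (a - 2) c t) t := by
  have hpow : HasDerivAt (fun t => t ^ a) (a * t ^ (a - 1)) t :=
    hasDerivAt_rpow_const (Or.inl ht.ne')
  have hinv : HasDerivAt (fun t => c / t) (-(c / t ^ 2)) t := by
    simpa [div_eq_mul_inv] using (hasDerivAt_inv ht.ne').const_mul c
  refine (hpow.mul ((hasDerivAt_id' t).neg.sub hinv).exp).congr_deriv ?_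
  simp only [besselKernel, Pi.sub_apply, Pi.neg_apply, rpow_sub ht, rpow_one, rpow_two]
  field_simp
  ring

lemma hasDerivAt_besselKernel_param (ht : 0 < t) :
    HasDerivAt (fun c => besselKernel a c t) (-besselKernel (a - 1) c t) c := by
  have : HasDerivAt (fun c => -t - c / t) (-(1 / t)) c := by
    simpa using ((hasDerivAt_id c).div_const t).const_sub (-t)
  refine (this.exp.const_mul (t ^ a)).congr_deriv ?_
  simp only [besselKernel, rpow_sub ht, rpow_one]
  field_simp

end Kernel

section Integral

variable {a c : ℝ}

lemma hasDerivAt_besselIntegral (hc : 0 < c) :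
    HasDerivAt (besselIntegral a) (-besselIntegral (a - 1) c) c := by
  have hbound : ∀ᵐ t ∂volume.restrict (Ioi 0), ∀ c' ∈ Metric.ball c (c / 2),
      ‖-besselKernel (a - 1) c' t‖ ≤ besselKernel (a - 1) (c / 2) t := by
    filter_upwards [ae_restrict_mem measurableSet_Ioi] with t (ht : 0 < t) c' hc'
    rw [Metric.mem_ball, Real.dist_eq, abs_lt] at hc'
    rw [norm_neg, norm_of_nonneg (besselKernel_nonneg ht.le)]
    exact besselKernel_antitone ht (by linarith)
  have key := hasDerivAt_integral_of_dominated_loc_of_deriv_le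
    (F := fun c t => besselKernel a c t) (F' := fun c t => -besselKernel (a - 1) c t)
    (Metric.ball_mem_nhds c (half_pos hc))
    (Eventually.of_forall fun _ => aestronglyMeasurable_besselKernel) (integrableOn_besselKernel hc)
    aestronglyMeasurable_besselKernel.neg hbound (integrableOn_besselKernel (half_pos hc))
    (ae_restrict_of_forall_mem measurableSet_Ioi fun t ht c' _ => hasDerivAt_besselKernel_param ht)
  unfold besselIntegral
  rw [← integral_neg]
  exact key.2

lemma besselIntegral_recurrence (hc : 0 < c) :
    besselIntegral a c = a * besselIntegral (a - 1) c + c * besselIntegral (a - 2) c := by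
  have h1 : IntegrableOn (fun t => a * besselKernel (a - 1) c t) (Ioi 0) :=
    (integrableOn_besselKernel hc).const_mul a
  have h0 : IntegrableOn (fun t => besselKernel a c t) (Ioi 0) := integrableOn_besselKernel hc
  have h2 : IntegrableOn (fun t => c * besselKernel (a - 2) c t) (Ioi 0) :=
    (integrableOn_besselKernel hc).const_mul c
  have h10 : IntegrableOn (fun t => a * besselKernel (a - 1) c t - besselKernel a c t) (Ioi 0) :=
    h1.sub h0
  have key := integral_Ioi_deriv_mul_eq_sub (v := fun _ => 1) (v' := fun _ => 0)
    (fun t ht => hasDerivAt_besselKernel ht) (fun t _ => hasDerivAt_const t 1)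
    (by simpa [Pi.add_def, Pi.mul_def] using h10.add h2)
    (by simpa [Pi.mul_def] using tendsto_besselKernel_nhdsGT_zero hc)
    (by simpa [Pi.mul_def] using tendsto_besselKernel_atTop hc.le)
  simp only [mul_one, mul_zero, add_zero, sub_zero] at key
  rw [integral_add h10 h2, integral_sub h1 h0, integral_const_mul,
    integral_const_mul] at key
  unfold besselIntegral
  linarith

lemma tendsto_besselIntegral_of_tendsto {l : Filter ℝ} [l.IsCountablyGenerated] (ha : -1 < a)
    (hl : ∀ᶠ c in l, 0 ≤ c) {g : ℝ → ℝ}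
    (hg : ∀ t, 0 < t → Tendsto (fun c => besselKernel a c t) l (𝓝 (g t))) :
    Tendsto (besselIntegral a) l (𝓝 (∫ t in Ioi 0, g t)) := by
  refine tendsto_integral_filter_of_dominated_convergence _
    (Eventually.of_forall fun _ => aestronglyMeasurable_besselKernel) ?_
    (integrableOn_exp_neg_mul_rpow ha) (ae_restrict_of_forall_mem measurableSet_Ioi hg)
  filter_upwards [hl] with c hc
  filter_upwards [ae_restrict_mem measurableSet_Ioi] with t (ht : 0 < t)
  rw [norm_of_nonneg (besselKernel_nonneg ht.le)]
  exact besselKernel_le_exp_neg_mul_rpow hc ht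

lemma tendsto_besselIntegral_nhdsGT_zero (ha : -1 < a) :
    Tendsto (besselIntegral a) (𝓝[>] 0) (𝓝 (Gamma (a + 1))) := by
  have hΓ : Gamma (a + 1) = ∫ t in Ioi 0, besselKernel a 0 t := by
    rw [Gamma_eq_integral (by linarith)]
    refine setIntegral_congr_fun measurableSet_Ioi fun t _ => ?_
    simp [besselKernel, mul_comm]
  rw [hΓ]
  refine tendsto_besselIntegral_of_tendsto ha (eventually_mem_nhdsWithin.mono fun c hc => hc.out.le)
    fun t ht => ?_
  have : Continuous fun c => besselKernel a c t := by unfold besselKernel; fun_prop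
  exact (this.tendsto 0).mono_left nhdsWithin_le_nhds

lemma tendsto_besselIntegral_atTop (ha : -1 < a) : Tendsto (besselIntegral a) atTop (𝓝 0) := by
  rw [← integral_zero ℝ ℝ]
  refine tendsto_besselIntegral_of_tendsto ha (eventually_ge_atTop 0) fun t ht => ?_
  have hexp : Tendsto (fun c => -t - c / t) atTop atBot :=
    tendsto_atBot_add_const_left _ _ (tendsto_neg_atTop_atBot.comp (tendsto_id.atTop_div_const ht))
  simpa [besselKernel] using (tendsto_exp_atBot.comp hexp).const_mul (t ^ a)

end Integral

/-- The substitution `t ↦ c / t`; for the Bessel function this is the symmetry `K_{-ν} = K_ν`. -/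
lemma besselIntegral_eq_rpow_mul (a : ℝ) {c : ℝ} (hc : 0 < c) :
    besselIntegral a c = c ^ (a + 1) * besselIntegral (-a - 2) c := by
  have hinv : besselIntegral a c = ∫ x in Ioi 0, x ^ (-a - 2) * exp (-c * x - x⁻¹) := by
    rw [besselIntegral, ← integral_comp_rpow_Ioi _ (p := -1) (by norm_num)]
    refine setIntegral_congr_fun measurableSet_Ioi fun x (hx : 0 < x) => ?_
    rw [besselKernel, smul_eq_mul, rpow_neg_one, inv_rpow hx.le, ← rpow_neg hx.le, div_inv_eq_mul]
    rw [show -a - 2 = -1 - 1 + -a by ring, rpow_add hx, abs_neg, abs_one, one_mul]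
    ring_nf
  have hscale : ∫ x in Ioi 0, besselKernel (-a - 2) c (c * x)
      = c ^ (-a - 2) * ∫ x in Ioi 0, x ^ (-a - 2) * exp (-c * x - x⁻¹) := by
    rw [← integral_const_mul]
    refine setIntegral_congr_fun measurableSet_Ioi fun x (hx : 0 < x) => ?_
    rw [besselKernel, mul_rpow hc.le hx.le, div_mul_cancel_left₀ hc.ne']
    ring_nf
  rw [integral_comp_mul_left_Ioi _ _ hc, mul_zero, smul_eq_mul, ← hinv] at hscale
  have hc_inv : c⁻¹ = c ^ (a + 1) * c ^ (-a - 2) := by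
    rw [← rpow_add hc, show a + 1 + (-a - 2) = -1 by ring, rpow_neg_one]
  refine mul_left_cancel₀ (rpow_pos_of_pos hc (-a - 2)).ne' ?_
  calc c ^ (-a - 2) * besselIntegral a c = c⁻¹ * besselIntegral (-a - 2) c := hscale.symm
    _ = c ^ (-a - 2) * (c ^ (a + 1) * besselIntegral (-a - 2) c) := by rw [hc_inv]; ring

/-- For `a = s - 1`, `besselProfile a λ y / Γ(s) = (2 ^ (1 - s) / Γ(s)) (√λ y) ^ s K_s(√λ y)`. -/
noncomputable def besselProfile (a lam y : ℝ) : ℝ := besselIntegral a (lam * y ^ 2 / 4)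

section Profile

variable {a lam y : ℝ}

lemma hasDerivAt_besselProfile (hlam : 0 < lam) (hy : y ≠ 0) :
    HasDerivAt (besselProfile a lam) (-(lam * y / 2) * besselProfile (a - 1) lam y) y := by
  have hc := ((hasDerivAt_pow 2 y).const_mul lam).div_const 4
  refine ((hasDerivAt_besselIntegral (a := a) (by positivity)).comp y hc).congr_deriv ?_
  simp only [besselProfile]
  ring

lemma hasDerivAt_neg_mul_besselProfile (hlam : 0 < lam) (hy : y ≠ 0) :
    HasDerivAt (fun y => -(lam * y / 2) * besselProfile (a - 1) lam y)
      ((lam * y / 2) ^ 2 * besselProfile (a - 2) lam y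
        - lam / 2 * besselProfile (a - 1) lam y) y := by
  have h := (((hasDerivAt_id' y).const_mul lam).div_const 2).neg.mul
    (hasDerivAt_besselProfile (a := a - 1) hlam hy)
  rw [show a - 1 - 1 = a - 2 by ring] at h
  exact h.congr_deriv (by simp only [Pi.neg_apply]; ring)

lemma besselProfile_ode (hlam : 0 < lam) (hy : 0 < y) :
    ((lam * y / 2) ^ 2 * besselProfile (a - 2) lam y - lam / 2 * besselProfile (a - 1) lam y)
      + (-1 - 2 * a) / y * (-(lam * y / 2) * besselProfile (a - 1) lam y)
      - lam * besselProfile a lam y = 0 := by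
  have hrec := besselIntegral_recurrence (a := a) (c := lam * y ^ 2 / 4) (by positivity)
  simp only [besselProfile, hrec]
  field_simp
  ring

lemma tendsto_besselProfile_nhdsGT_zero (ha : -1 < a) (hlam : 0 < lam) :
    Tendsto (besselProfile a lam) (𝓝[>] 0) (𝓝 (Gamma (a + 1))) := by
  have hc : Tendsto (fun y : ℝ => lam * y ^ 2 / 4) (𝓝[>] 0) (𝓝[>] 0) := by
    refine tendsto_nhdsWithin_iff.2 ⟨?_, eventually_mem_nhdsWithin.mono fun y (hy : 0 < y) => ?_⟩
    · exact ((continuous_const.mul (continuous_pow 2)).div_const 4).tendsto' 0 0 (by simp)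
        |>.mono_left nhdsWithin_le_nhds
    · show 0 < lam * y ^ 2 / 4
      positivity
  exact (tendsto_besselIntegral_nhdsGT_zero ha).comp hc

lemma tendsto_besselProfile_atTop (ha : -1 < a) (hlam : 0 < lam) :
    Tendsto (besselProfile a lam) atTop (𝓝 0) :=
  (tendsto_besselIntegral_atTop ha).comp
    (((tendsto_pow_atTop two_ne_zero).const_mul_atTop hlam).atTop_div_const (by norm_num))

lemma tendsto_rpow_mul_besselProfile_sub_one (ha : a < 0) (hlam : 0 < lam) :
    Tendsto (fun y => y ^ (-1 - 2 * a) * (lam * y / 2 * besselProfile (a - 1) lam y)) (𝓝[>] 0)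
      (𝓝 (lam / 2 * (lam / 4) ^ a * Gamma (-a))) := by
  have hlim := (tendsto_besselProfile_nhdsGT_zero (a := -a - 1) (by linarith) hlam).const_mul
    (lam / 2 * (lam / 4) ^ a)
  rw [sub_add_cancel] at hlim
  refine hlim.congr' (eventually_mem_nhdsWithin.mono fun y (hy : 0 < y) => ?_)
  -- `K_{a-1}` turns into `K_{-a-1}` and the powers of `y` cancel
  have hsymm := besselIntegral_eq_rpow_mul (a - 1) (c := lam * y ^ 2 / 4) (by positivity)
  rw [show a - 1 + 1 = a by ring, show -(a - 1) - 2 = -a - 1 by ring] at hsymm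
  have hc : (lam * y ^ 2 / 4) ^ a = (lam / 4) ^ a * y ^ (2 * a) := by
    rw [show lam * y ^ 2 / 4 = lam / 4 * y ^ 2 by ring, mul_rpow (by positivity) (by positivity),
      ← rpow_natCast, ← rpow_mul hy.le, Nat.cast_ofNat]
  have hy_pow : y ^ (-1 - 2 * a) * y * y ^ (2 * a) = 1 := by
    rw [← rpow_add_one hy.ne', ← rpow_add hy, show -1 - 2 * a + 1 + 2 * a = 0 by ring, rpow_zero]
  simp only [besselProfile]
  rw [hsymm, hc]
  linear_combination
    (-(lam / 2 * (lam / 4) ^ a * besselIntegral (-a - 1) (lam * y ^ 2 / 4))) * hy_pow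

end Profile

lemma exists_isMaxOn_Ioi_of_tendsto_zero {f : ℝ → ℝ} (hf : ContinuousOn f (Ioi 0))
    (h0 : Tendsto f (𝓝[>] 0) (𝓝 0)) (hT : Tendsto f atTop (𝓝 0)) {y₀ : ℝ} (hy₀ : 0 < y₀)
    (hpos : 0 < f y₀) : ∃ c, 0 < c ∧ IsMaxOn f (Ioi 0) c := by
  obtain ⟨u, hu, hsmall⟩ := mem_nhdsGT_iff_exists_Ioo_subset.1 (h0.eventually (gt_mem_nhds hpos))
  obtain ⟨b, hlarge⟩ := eventually_atTop.1 (hT.eventually (gt_mem_nhds hpos))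
  have ha : 0 < min (u / 2) y₀ := lt_min (half_pos hu) hy₀
  obtain ⟨c, hc, hmax⟩ := isCompact_Icc.exists_isMaxOn
    (nonempty_Icc.2 ((min_le_right _ _).trans (le_max_right b y₀)))
    (hf.mono fun y hy => ha.trans_le hy.1)
  have hy₀c : f y₀ ≤ f c := hmax ⟨min_le_right _ _, le_max_right _ _⟩
  refine ⟨c, ha.trans_le hc.1, fun y (hy : 0 < y) => ?_⟩
  rcases lt_or_ge y (min (u / 2) y₀) with h | h
  · exact (hsmall ⟨hy, h.trans_le (min_le_left _ _) |>.trans (half_lt_self hu)⟩).out.le.trans hy₀c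
  rcases le_or_gt (max b y₀) y with h' | h'
  · exact (hlarge y (le_of_max_le_left h')).le.trans hy₀c
  · exact hmax ⟨h, h'.le⟩

lemma IsLocalMax.hasDerivAt_deriv_nonpos {f f' : ℝ → ℝ} {c f'' : ℝ} (hmax : IsLocalMax f c)
    (hf : ∀ᶠ y in 𝓝 c, HasDerivAt f (f' y) y) (hf' : HasDerivAt f' f'' c) : f'' ≤ 0 := by
  by_contra! hpos
  have hderiv : deriv f =ᶠ[𝓝 c] f' := hf.mono fun y hy => hy.deriv
  have hmin : IsLocalMin f c := isLocalMin_of_deriv_deriv_pos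
    (by rwa [(hf'.congr_of_eventuallyEq hderiv).deriv])
    (by rw [hderiv.eq_of_nhds, hmax.hasDerivAt_eq_zero hf.self_of_nhds])
    hf.self_of_nhds.continuousAt
  -- a point that is both a local minimum and a local maximum is in a plateau
  have hconst : ∀ᶠ y in 𝓝 c, f =ᶠ[𝓝 y] fun _ => f c :=
    ((hmin.and hmax).mono fun y hy => le_antisymm hy.2 hy.1).eventually_nhds
  have hzero : f' =ᶠ[𝓝 c] fun _ => 0 := (hconst.and hf).mono fun y ⟨hy, hd⟩ =>
    hd.unique ((hasDerivAt_const y (f c)).congr_of_eventuallyEq hy)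
  have := hf'.congr_of_eventuallyEq hzero.symm |>.unique (hasDerivAt_const c (0 : ℝ))
  exact hpos.ne' this

def IsExtensionSolution (α lam : ℝ) (ψ ψ' ψ'' : ℝ → ℝ) : Prop :=
  ∀ y, 0 < y →
    HasDerivAt ψ (ψ' y) y ∧ HasDerivAt ψ' (ψ'' y) y ∧ ψ'' y + α / y * ψ' y - lam * ψ y = 0

namespace IsExtensionSolution

variable {α lam : ℝ} {ψ ψ' ψ'' φ φ' φ'' : ℝ → ℝ}

lemma sub (hψ : IsExtensionSolution α lam ψ ψ' ψ'') (hφ : IsExtensionSolution α lam φ φ' φ'') :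
    IsExtensionSolution α lam (ψ - φ) (ψ' - φ') (ψ'' - φ'') := fun y hy => by
  obtain ⟨hψ₁, hψ₂, hψ₃⟩ := hψ y hy
  obtain ⟨hφ₁, hφ₂, hφ₃⟩ := hφ y hy
  exact ⟨hψ₁.sub hφ₁, hψ₂.sub hφ₂, by simp only [Pi.sub_apply]; linear_combination hψ₃ - hφ₃⟩

lemma div_const (hψ : IsExtensionSolution α lam ψ ψ' ψ'') (d : ℝ) :
    IsExtensionSolution α lam (fun y => ψ y / d) (fun y => ψ' y / d) (fun y => ψ'' y / d) :=
  fun y hy => by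
  obtain ⟨h₁, h₂, h₃⟩ := hψ y hy
  exact ⟨h₁.div_const d, h₂.div_const d, by linear_combination h₃ / d⟩

lemma nonpos (hlam : 0 < lam) (hψ : IsExtensionSolution α lam ψ ψ' ψ'')
    (h0 : Tendsto ψ (𝓝[>] 0) (𝓝 0)) (hT : Tendsto ψ atTop (𝓝 0)) {y : ℝ} (hy : 0 < y) :
    ψ y ≤ 0 := by
  by_contra! hpos
  obtain ⟨c, hc, hmax⟩ := exists_isMaxOn_Ioi_of_tendsto_zero
    (fun y hy => (hψ y hy).1.continuousAt.continuousWithinAt) h0 hT hy hpos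
  obtain ⟨hd₁, hd₂, hode⟩ := hψ c hc
  have hloc : IsLocalMax ψ c := hmax.isLocalMax (Ioi_mem_nhds hc)
  have hψ'c : ψ' c = 0 := hloc.hasDerivAt_eq_zero hd₁
  have hψ''c : ψ'' c ≤ 0 :=
    hloc.hasDerivAt_deriv_nonpos ((eventually_gt_nhds hc).mono fun y hy => (hψ y hy).1) hd₂
  have : 0 < lam * ψ c := mul_pos hlam (hpos.trans_le (hmax hy))
  rw [hψ'c] at hode
  linarith

lemma eqOn (hlam : 0 < lam) (hψ : IsExtensionSolution α lam ψ ψ' ψ'')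
    (hφ : IsExtensionSolution α lam φ φ' φ'') {L M : ℝ}
    (hψ0 : Tendsto ψ (𝓝[>] 0) (𝓝 L)) (hφ0 : Tendsto φ (𝓝[>] 0) (𝓝 L))
    (hψT : Tendsto ψ atTop (𝓝 M)) (hφT : Tendsto φ atTop (𝓝 M)) :
    EqOn ψ φ (Ioi 0) ∧ EqOn ψ' φ' (Ioi 0) := by
  have heq : EqOn ψ φ (Ioi 0) := fun y (hy : 0 < y) => by
    have hle := (hψ.sub hφ).nonpos hlam (sub_self L ▸ hψ0.sub hφ0) (sub_self M ▸ hψT.sub hφT) hy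
    have hge := (hφ.sub hψ).nonpos hlam (sub_self L ▸ hφ0.sub hψ0) (sub_self M ▸ hφT.sub hψT) hy
    simp only [Pi.sub_apply] at hle hge
    linarith
  refine ⟨heq, fun y (hy : 0 < y) => ?_⟩
  have hev : ψ =ᶠ[𝓝 y] φ := eventually_of_mem (Ioi_mem_nhds hy) heq
  exact (hψ y hy).1.unique ((hφ y hy).1.congr_of_eventuallyEq hev)

end IsExtensionSolution

lemma isExtensionSolution_besselProfile {a lam : ℝ} (hlam : 0 < lam) :
    IsExtensionSolution (-1 - 2 * a) lam (besselProfile a lam)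
      (fun y => -(lam * y / 2) * besselProfile (a - 1) lam y)
      (fun y => (lam * y / 2) ^ 2 * besselProfile (a - 2) lam y
        - lam / 2 * besselProfile (a - 1) lam y) := fun _ hy =>
  ⟨hasDerivAt_besselProfile hlam hy.ne', hasDerivAt_neg_mul_besselProfile hlam hy.ne',
    besselProfile_ode hlam hy⟩

lemma div_two_mul_div_four_rpow_sub_one {lam : ℝ} (hlam : 0 < lam) (s : ℝ) :
    lam / 2 * (lam / 4) ^ (s - 1) = 2 ^ (1 - 2 * s) * lam ^ s := by
  rw [div_rpow hlam.le (by norm_num), rpow_sub_one hlam.ne', show (4 : ℝ) = 2 ^ (2 : ℝ) by norm_num,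
    ← rpow_mul two_pos.le, mul_sub, mul_one, rpow_sub two_pos, rpow_sub two_pos, rpow_one]
  field_simp
  norm_num

/-- Scalar (fiberwise) Caffarelli–Silvestre extension identity: if `ψ` is the
decaying solution of `ψ'' + (α/y)ψ' − λψ = 0` on `(0,∞)` with `ψ(0⁺) = 1`
(where `α = 1−2s`), then `−lim_{y→0⁺} y^α ψ'(y) = d_s λ^s` with
`d_s = 2^{1-2s}Γ(1-s)/Γ(s)`. -/
theorem stmt_14 (s lam : ℝ) (hs : s ∈ Set.Ioo (0:ℝ) 1) (hlam : 0 < lam)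
    (α : ℝ) (hα : α = 1 - 2 * s)
    (ψ ψ' ψ'' : ℝ → ℝ)
    (hd1 : ∀ y, 0 < y → HasDerivAt ψ (ψ' y) y)
    (hd2 : ∀ y, 0 < y → HasDerivAt ψ' (ψ'' y) y)
    (hode : ∀ y, 0 < y → ψ'' y + (α / y) * ψ' y - lam * ψ y = 0)
    (hbc : Tendsto ψ (nhdsWithin 0 (Set.Ioi 0)) (nhds 1))
    (hdecay : Tendsto ψ atTop (nhds 0)) :
    Tendsto (fun y => -(y ^ α * ψ' y)) (nhdsWithin 0 (Set.Ioi 0))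
      (nhds (((2:ℝ) ^ (1 - 2 * s) * Real.Gamma (1 - s) / Real.Gamma s)
        * lam ^ s)) := by
  obtain ⟨hs0, hs1⟩ := hs
  have hψ : IsExtensionSolution α lam ψ ψ' ψ'' := fun y hy => ⟨hd1 y hy, hd2 y hy, hode y hy⟩
  have hα' : -1 - 2 * (s - 1) = α := by rw [hα]; ring
  have hprofile := (isExtensionSolution_besselProfile (a := s - 1) hlam).div_const (Gamma s)
  have hprofile0 := (tendsto_besselProfile_nhdsGT_zero (a := s - 1) (by linarith) hlam).div_const
    (Gamma s)
  have hprofileT := (tendsto_besselProfile_atTop (a := s - 1) (by linarith) hlam).div_const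
    (Gamma s)
  rw [hα'] at hprofile
  rw [sub_add_cancel, div_self (Gamma_pos_of_pos hs0).ne'] at hprofile0
  rw [zero_div] at hprofileT
  have hψ' := (hψ.eqOn hlam hprofile hbc hprofile0 hdecay hprofileT).2
  have hflux := (tendsto_rpow_mul_besselProfile_sub_one (a := s - 1) (by linarith) hlam).div_const
    (Gamma s)
  rw [hα', div_two_mul_div_four_rpow_sub_one hlam, neg_sub] at hflux
  rw [show 2 ^ (1 - 2 * s) * Gamma (1 - s) / Gamma s * lam ^ s
    = 2 ^ (1 - 2 * s) * lam ^ s * Gamma (1 - s) / Gamma s by ring]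
  refine hflux.congr' (eventually_mem_nhdsWithin.mono fun y (hy : 0 < y) => ?_)
  dsimp only
  rw [hψ' hy]
  ring
end

section
/- (Truncation to a finite cylinder) Let λ > 0, α = 1−2s ∈ (−1,1), and let ψ_λ be the decaying solution on (0,∞) of ψ'' + (α/y)ψ' = λψ, ψ(0)=1 (given in terms of the Bessel function K_s). Then there exist constants C, b > 0 depending only on s and λ_1 such that for all λ ≥ λ_1 and Y ≥ 1: ∫_Y^∞ y^α (|ψ_λ'(y)|² + λ |ψ_λ(y)|²) dy ≤ C λ^s e^{-b√λ Y}. Consequently the energy of the Caffarelli–Silvestre extension outside the truncated cylinder Ω × (0,Y) decays exponentially in Y. -/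
/-!
The weighted flux `w = y^α ψ ψ'` has derivative `y^α (ψ'² + λψ²)`, the energy density, because
the equation reads `(y^α ψ')' = λ y^α ψ`. Hence the tail energy beyond `Y` equals `-w(Y)` once we
know `w → 0`. Since `w` is nondecreasing and `(ψ²/2)' = y^{-α} w` with `-α > -1`, if `w` were
positive somewhere, or stayed below a negative constant, then `±ψ²` would grow like `y^{1-α}`,
contradicting `ψ → 0`; so `w ≤ 0` and `w → 0`. In particular `ψ²` decreases from `1`, and the
mean value theorem on `[1/4, 1/2]` produces a point `ξ` with `-w(ξ) ≤ 8`. Finally `-2√λ w ≤ w'`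
by completing the square, so `w e^{2√λ y}` is nondecreasing, giving
`-w(Y) ≤ 8 e^{2√λ (ξ - Y)} ≤ 8 e^{-√λ Y}` for `Y ≥ 1`.
-/

open Real Filter MeasureTheory Set Topology

lemma monotoneOn_Ioi_of_hasDerivAt_nonneg {a : ℝ} {f f' : ℝ → ℝ}
    (hf : ∀ x, a < x → HasDerivAt f (f' x) x) (hf' : ∀ x, a < x → 0 ≤ f' x) :
    MonotoneOn f (Ioi a) := by
  refine monotoneOn_of_hasDerivWithinAt_nonneg (f' := f') (convex_Ioi a)
    (fun x hx => (hf x hx).continuousAt.continuousWithinAt) ?_ ?_ <;> rw [interior_Ioi]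
  exacts [fun x hx => (hf x hx).hasDerivWithinAt, hf']

lemma antitoneOn_Ioi_of_hasDerivAt_nonpos {a : ℝ} {f f' : ℝ → ℝ}
    (hf : ∀ x, a < x → HasDerivAt f (f' x) x) (hf' : ∀ x, a < x → f' x ≤ 0) :
    AntitoneOn f (Ioi a) := by
  refine antitoneOn_of_hasDerivWithinAt_nonpos (f' := f') (convex_Ioi a)
    (fun x hx => (hf x hx).continuousAt.continuousWithinAt) ?_ ?_ <;> rw [interior_Ioi]
  exacts [fun x hx => (hf x hx).hasDerivWithinAt, hf']

lemma tendsto_atTop_of_rpow_le_deriv {q c a : ℝ} {φ φ' : ℝ → ℝ} (hq : -1 < q) (hc : 0 < c)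
    (ha : 0 ≤ a) (hφ : ∀ y, a < y → HasDerivAt φ (φ' y) y)
    (hφ' : ∀ y, a < y → c * y ^ q ≤ φ' y) : Tendsto φ atTop atTop := by
  have hq1 : 0 < q + 1 := by linarith
  set G : ℝ → ℝ := fun y => c / (q + 1) * y ^ (q + 1)
  have hG : ∀ y, 0 < y → HasDerivAt G (c * y ^ q) y := fun y hy => by
    have h := (hasDerivAt_rpow_const (p := q + 1) (Or.inl hy.ne')).const_mul (c / (q + 1))
    refine h.congr_deriv ?_
    rw [add_sub_cancel_right]
    field_simp
  have hmono : MonotoneOn (φ - G) (Ioi a) :=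
    monotoneOn_Ioi_of_hasDerivAt_nonneg (fun y hy => (hφ y hy).sub (hG y (ha.trans_lt hy)))
      fun y hy => sub_nonneg.2 (hφ' y hy)
  have hlower : ∀ y, a + 1 ≤ y → (φ - G) (a + 1) + G y ≤ φ y := fun y hy => by
    have := hmono (show a < a + 1 by linarith) (show a < y by linarith) hy
    simp only [Pi.sub_apply] at this ⊢
    linarith
  refine tendsto_atTop_mono' atTop (eventually_atTop.2 ⟨a + 1, hlower⟩)
    (tendsto_atTop_add_const_left _ _ ?_)
  exact (tendsto_rpow_atTop hq1).const_mul_atTop (by positivity)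

section AntiderivativeDecay

variable {v w : ℝ → ℝ} {q : ℝ}

lemma nonpos_of_hasDerivAt_rpow_mul (hq : -1 < q)
    (hv : ∀ y, 0 < y → HasDerivAt v (y ^ q * w y) y) (hw : MonotoneOn w (Ioi 0))
    (hv0 : Tendsto v atTop (𝓝 0)) {y : ℝ} (hy : 0 < y) : w y ≤ 0 := by
  by_contra! hpos
  refine not_tendsto_atTop_of_tendsto_nhds hv0 <| tendsto_atTop_of_rpow_le_deriv hq hpos hy.le
    (fun z hz => hv z (hy.trans hz)) fun z hz => ?_
  rw [mul_comm]
  exact mul_le_mul_of_nonneg_left (hw hy (hy.trans hz) hz.le) (rpow_nonneg (hy.trans hz).le q)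

lemma tendsto_zero_of_hasDerivAt_rpow_mul (hq : -1 < q)
    (hv : ∀ y, 0 < y → HasDerivAt v (y ^ q * w y) y) (hw : MonotoneOn w (Ioi 0))
    (hv0 : Tendsto v atTop (𝓝 0)) : Tendsto w atTop (𝓝 0) := by
  have hnonpos := fun y (hy : 0 < y) => nonpos_of_hasDerivAt_rpow_mul hq hv hw hv0 hy
  refine tendsto_order.2 ⟨fun a ha => ?_, fun a ha =>
    eventually_atTop.2 ⟨1, fun y hy => (hnonpos y (one_pos.trans_le hy)).trans_lt ha⟩⟩
  by_contra hfreq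
  have hle : ∀ y, 0 < y → w y ≤ a := fun y hy => by
    by_contra! hlt
    exact hfreq (eventually_atTop.2 ⟨y, fun z hz => hlt.trans_le (hw hy (hy.trans_le hz) hz)⟩)
  refine not_tendsto_atTop_of_tendsto_nhds (by simpa using hv0.neg) <|
    tendsto_atTop_of_rpow_le_deriv (φ := fun x => -v x) hq (neg_pos.2 ha) le_rfl
      (fun z hz => (hv z hz).neg) fun z hz => ?_
  nlinarith [mul_le_mul_of_nonneg_left (hle z hz) (rpow_nonneg hz.le q)]

end AntiderivativeDecay

lemma monotoneOn_mul_exp_of_hasDerivAt {w f : ℝ → ℝ} {k : ℝ}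
    (hw : ∀ y, 0 < y → HasDerivAt w (f y) y) (hf : ∀ y, 0 < y → -(k * w y) ≤ f y) :
    MonotoneOn (fun y => w y * exp (k * y)) (Ioi 0) := by
  refine monotoneOn_Ioi_of_hasDerivAt_nonneg (f' := fun y => (f y + k * w y) * exp (k * y))
    (fun y hy => ?_) fun y hy => mul_nonneg (by linarith [hf y hy]) (exp_pos _).le
  refine ((hw y hy).mul ((hasDerivAt_id' y).const_mul k).exp).congr_deriv ?_
  ring

lemma hasDerivAt_half_sq {ψ ψ' : ℝ → ℝ} {y : ℝ} (h : HasDerivAt ψ (ψ' y) y) :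
    HasDerivAt (fun x => ψ x ^ 2 / 2) (ψ y * ψ' y) y := by
  refine ((h.pow 2).div_const 2).congr_deriv ?_
  push_cast
  ring

noncomputable def flux (α : ℝ) (ψ ψ' : ℝ → ℝ) (y : ℝ) : ℝ := y ^ α * (ψ y * ψ' y)

noncomputable def energyDensity (α lam : ℝ) (ψ ψ' : ℝ → ℝ) (y : ℝ) : ℝ :=
  y ^ α * (ψ' y ^ 2 + lam * ψ y ^ 2)

section Flux

variable {α lam : ℝ} {ψ ψ' ψ'' : ℝ → ℝ}

lemma rpow_neg_mul_flux {y : ℝ} (hy : 0 < y) : y ^ (-α) * flux α ψ ψ' y = ψ y * ψ' y := by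
  rw [flux, rpow_neg hy.le, ← mul_assoc, inv_mul_cancel₀ (rpow_pos_of_pos hy α).ne', one_mul]

lemma hasDerivAt_flux (hd1 : ∀ y, 0 < y → HasDerivAt ψ (ψ' y) y)
    (hd2 : ∀ y, 0 < y → HasDerivAt ψ' (ψ'' y) y)
    (hode : ∀ y, 0 < y → ψ'' y + α / y * ψ' y = lam * ψ y) {y : ℝ} (hy : 0 < y) :
    HasDerivAt (flux α ψ ψ') (energyDensity α lam ψ ψ' y) y := by
  refine ((hasDerivAt_rpow_const (p := α) (Or.inl hy.ne')).mul
    ((hd1 y hy).mul (hd2 y hy))).congr_deriv ?_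
  rw [energyDensity, Pi.mul_apply, rpow_sub_one hy.ne', eq_sub_of_add_eq (hode y hy)]
  field_simp
  ring

lemma energyDensity_nonneg (hlam : 0 ≤ lam) {y : ℝ} (hy : 0 < y) :
    0 ≤ energyDensity α lam ψ ψ' y := by
  unfold energyDensity
  positivity

lemma neg_two_sqrt_mul_flux_le (hlam : 0 ≤ lam) {y : ℝ} (hy : 0 < y) :
    -(2 * √lam * flux α ψ ψ' y) ≤ energyDensity α lam ψ ψ' y := by
  have hsquare : energyDensity α lam ψ ψ' y + 2 * √lam * flux α ψ ψ' y
      = y ^ α * (ψ' y + √lam * ψ y) ^ 2 := by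
    rw [energyDensity, flux, add_sq, mul_pow, sq_sqrt hlam]
    ring
  linarith [mul_nonneg (rpow_nonneg hy.le α) (sq_nonneg (ψ' y + √lam * ψ y))]

lemma sq_le_one_of_flux_nonpos (hd1 : ∀ y, 0 < y → HasDerivAt ψ (ψ' y) y)
    (hw : ∀ y, 0 < y → flux α ψ ψ' y ≤ 0) (hbc : Tendsto ψ (𝓝[>] 0) (𝓝 1)) {y : ℝ}
    (hy : 0 < y) : ψ y ^ 2 ≤ 1 := by
  have hanti : AntitoneOn (fun x => ψ x ^ 2 / 2) (Ioi 0) :=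
    antitoneOn_Ioi_of_hasDerivAt_nonpos (fun x hx => hasDerivAt_half_sq (hd1 x hx)) fun x hx => by
      rw [← rpow_neg_mul_flux hx]
      exact mul_nonpos_of_nonneg_of_nonpos (rpow_nonneg hx.le _) (hw x hx)
  have hlim : Tendsto (fun x => ψ x ^ 2 / 2) (𝓝[>] 0) (𝓝 (1 / 2)) := by
    simpa using (hbc.pow 2).div_const 2
  have : ψ y ^ 2 / 2 ≤ 1 / 2 := ge_of_tendsto hlim <| by
    filter_upwards [Ioo_mem_nhdsGT hy] with t ht using hanti ht.1 hy ht.2.le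
  linarith

lemma exists_neg_flux_le (hα : -1 ≤ α) (hd1 : ∀ y, 0 < y → HasDerivAt ψ (ψ' y) y)
    (hsq : ∀ y, 0 < y → ψ y ^ 2 ≤ 1) : ∃ ξ ∈ Ioo (1 / 4 : ℝ) (1 / 2), -flux α ψ ψ' ξ ≤ 8 := by
  have hd : ∀ x, 0 < x → HasDerivAt (fun x => ψ x ^ 2 / 2) (ψ x * ψ' x) x :=
    fun x hx => hasDerivAt_half_sq (hd1 x hx)
  obtain ⟨ξ, hξ, hslope⟩ := exists_hasDerivAt_eq_slope _ _ (by norm_num : (1 / 4 : ℝ) < 1 / 2)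
    (fun x hx => (hd x (by linarith [hx.1])).continuousAt.continuousWithinAt)
    fun x hx => hd x (by linarith [hx.1])
  refine ⟨ξ, hξ, ?_⟩
  have hξ0 : 0 < ξ := by linarith [hξ.1]
  have hprod : -(ψ ξ * ψ' ξ) ≤ 2 := by
    rw [hslope]
    norm_num
    nlinarith [sq_nonneg (ψ (1 / 2)), hsq (1 / 4) (by norm_num)]
  have hpow : ξ ^ α ≤ 4 := calc
    ξ ^ α ≤ ξ ^ (-1 : ℝ) := rpow_le_rpow_of_exponent_ge hξ0 (by linarith [hξ.2]) hα
    _ = ξ⁻¹ := rpow_neg_one ξ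
    _ ≤ 4 := by rw [inv_le_comm₀ hξ0 (by norm_num)]; linarith [hξ.1]
  calc -flux α ψ ψ' ξ = ξ ^ α * -(ψ ξ * ψ' ξ) := by rw [flux]; ring
    _ ≤ ξ ^ α * 2 := mul_le_mul_of_nonneg_left hprod (rpow_nonneg hξ0.le α)
    _ ≤ 8 := by linarith

end Flux

lemma integral_Ioi_energyDensity_le {α lam Y : ℝ} {ψ ψ' ψ'' : ℝ → ℝ} (hα₀ : -1 ≤ α)
    (hα₁ : α < 1) (hlam : 0 ≤ lam) (hd1 : ∀ y, 0 < y → HasDerivAt ψ (ψ' y) y)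
    (hd2 : ∀ y, 0 < y → HasDerivAt ψ' (ψ'' y) y)
    (hode : ∀ y, 0 < y → ψ'' y + α / y * ψ' y = lam * ψ y)
    (hbc : Tendsto ψ (𝓝[>] 0) (𝓝 1)) (hdecay : Tendsto ψ atTop (𝓝 0)) (hY : 1 ≤ Y) :
    ∫ y in Ioi Y, energyDensity α lam ψ ψ' y ≤ 8 * exp (-(√lam * Y)) := by
  have hY0 : 0 < Y := one_pos.trans_le hY
  have hw : ∀ y, 0 < y → HasDerivAt (flux α ψ ψ') (energyDensity α lam ψ ψ' y) y :=
    fun y hy => hasDerivAt_flux hd1 hd2 hode hy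
  have hv : ∀ y, 0 < y → HasDerivAt (fun x => ψ x ^ 2 / 2) (y ^ (-α) * flux α ψ ψ' y) y :=
    fun y hy => by rw [rpow_neg_mul_flux hy]; exact hasDerivAt_half_sq (hd1 y hy)
  have hv0 : Tendsto (fun x => ψ x ^ 2 / 2) atTop (𝓝 0) := by
    simpa using (hdecay.pow 2).div_const 2
  have hmono : MonotoneOn (flux α ψ ψ') (Ioi 0) :=
    monotoneOn_Ioi_of_hasDerivAt_nonneg hw fun y hy => energyDensity_nonneg hlam hy
  have hq : -1 < -α := by linarith
  have hnonpos := fun y (hy : 0 < y) => nonpos_of_hasDerivAt_rpow_mul hq hv hmono hv0 hy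
  obtain ⟨ξ, hξ, hwξ⟩ :=
    exists_neg_flux_le hα₀ hd1 fun y hy => sq_le_one_of_flux_nonpos hd1 hnonpos hbc hy
  have hξ0 : 0 < ξ := by linarith [hξ.1]
  have hgrowth := monotoneOn_mul_exp_of_hasDerivAt (k := 2 * √lam) hw
    fun y hy => neg_two_sqrt_mul_flux_le hlam hy
  have hξY := hgrowth hξ0 hY0 (by linarith [hξ.2])
  rw [integral_Ioi_of_hasDerivAt_of_nonneg' (fun x hx => hw x (hY0.trans_le hx))
    (fun x hx => energyDensity_nonneg hlam (hY0.trans hx))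
    (tendsto_zero_of_hasDerivAt_rpow_mul hq hv hmono hv0), zero_sub]
  have hexp : exp (2 * √lam * ξ) ≤ exp (√lam * Y) :=
    exp_le_exp.2 (by nlinarith [sqrt_nonneg lam, hξ.2])
  calc -flux α ψ ψ' Y
        = -(flux α ψ ψ' Y * exp (2 * √lam * Y)) * exp (-(2 * √lam * Y)) := by
        rw [neg_mul, mul_assoc, ← exp_add, add_neg_cancel, exp_zero, mul_one]
    _ ≤ -(flux α ψ ψ' ξ * exp (2 * √lam * ξ)) * exp (-(2 * √lam * Y)) :=
        mul_le_mul_of_nonneg_right (neg_le_neg hξY) (exp_pos _).le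
    _ ≤ 8 * exp (√lam * Y) * exp (-(2 * √lam * Y)) := by
        gcongr
        rw [← neg_mul]
        exact mul_le_mul hwξ hexp (exp_pos _).le (by norm_num)
    _ = 8 * exp (-(√lam * Y)) := by rw [mul_assoc, ← exp_add]; ring_nf

/-- Exponential decay of the tail energy of the (fiberwise) Caffarelli–
Silvestre extension: for the decaying solution `ψ_λ` of
`ψ'' + (α/y)ψ' = λψ`, `ψ(0⁺)=1`, `α = 1-2s`, there are `C, b > 0` depending
only on `s, λ₁` with
`∫_Y^∞ y^α (ψ_λ'² + λψ_λ²) ≤ C λ^s e^{-b√λ Y}` for all `λ ≥ λ₁`, `Y ≥ 1`. -/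
theorem stmt_19 (s : ℝ) (hs : s ∈ Set.Ioo (0:ℝ) 1) (α : ℝ) (hα : α = 1 - 2 * s)
    (lam1 : ℝ) (hlam1 : 0 < lam1)
    (ψ ψ' ψ'' : ℝ → ℝ → ℝ)
    (hd1 : ∀ lam, lam1 ≤ lam → ∀ y, 0 < y → HasDerivAt (ψ lam) (ψ' lam y) y)
    (hd2 : ∀ lam, lam1 ≤ lam → ∀ y, 0 < y → HasDerivAt (ψ' lam) (ψ'' lam y) y)
    (hode : ∀ lam, lam1 ≤ lam → ∀ y, 0 < y →
      ψ'' lam y + (α / y) * ψ' lam y = lam * ψ lam y)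
    (hbc : ∀ lam, lam1 ≤ lam →
      Tendsto (ψ lam) (nhdsWithin 0 (Set.Ioi 0)) (nhds 1))
    (hdecay : ∀ lam, lam1 ≤ lam → Tendsto (ψ lam) atTop (nhds 0)) :
    ∃ C b : ℝ, 0 < C ∧ 0 < b ∧ ∀ lam, lam1 ≤ lam → ∀ Y : ℝ, 1 ≤ Y →
      (∫ y in Set.Ioi Y, y ^ α * ((ψ' lam y) ^ 2 + lam * (ψ lam y) ^ 2))
        ≤ C * lam ^ s * Real.exp (-b * Real.sqrt lam * Y) := by
  obtain ⟨hs0, hs1⟩ := hs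
  refine ⟨8 / lam1 ^ s, 1, by positivity, one_pos, fun lam hlam Y hY => ?_⟩
  have hC : 8 ≤ 8 / lam1 ^ s * lam ^ s := by
    rw [div_mul_eq_mul_div, le_div_iff₀ (by positivity)]
    gcongr
  calc _ ≤ 8 * exp (-(√lam * Y)) :=
        integral_Ioi_energyDensity_le (by linarith) (by linarith) (hlam1.trans_le hlam).le
          (hd1 lam hlam) (hd2 lam hlam) (hode lam hlam) (hbc lam hlam) (hdecay lam hlam) hY
    _ ≤ 8 / lam1 ^ s * lam ^ s * exp (-1 * √lam * Y) := by
        rw [neg_one_mul, neg_mul]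
        gcongr
end
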